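/- arXiv:1504.02887 — 2 statements merged into one kernel-verified Lean document; each statement's English description precedes it below -/
import Mathlib

section
/- Let d ≥ 1 and n ≥ 1 be integers and let C : ℝ^d → ℝ be d times continuously differentiable on an open set containing [0,1]^d. Then for every m = (m_1,…,m_d) ∈ ℝ^d, the d-fold mixed partial derivative ∂^d/∂m_1⋯∂m_d of the map m ↦ C(Φ(m_1),…,Φ(m_d))^n equals (∏_{j=1}^d φ(m_j)) · ∑_{j=1}^{min(d,n)} [ (n!/(n−j)!) · C(Φ(m_1),…,Φ(m_d))^{n−j} · ∑_{𝒫∈𝒮_{d,j}} ∏_{M∈𝒫} ∂_M C(Φ(m_1),…,Φ(m_d)) ]. (This is the joint density of the vector of componentwise block-maxima on the marginally standard-normal scale.) -/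
open scoped Classical

noncomputable section

/-- Partial derivative of `f : ℝ^d → ℝ` with respect to the `i`-th coordinate. -/
def coordPartial {d : ℕ} (i : Fin d) (f : (Fin d → ℝ) → ℝ) : (Fin d → ℝ) → ℝ :=
  fun x => deriv (fun t => f (Function.update x i t)) (x i)

/-- Mixed partial derivative `∂_M f`, taken once with respect to each coordinate in `M`
(in increasing order of the indices). -/
def mixedPartial {d : ℕ} (M : Finset (Fin d)) (f : (Fin d → ℝ) → ℝ) : (Fin d → ℝ) → ℝ :=
  (M.sort (· ≤ ·)).foldr coordPartial f

/-- The iterated mixed partial derivative `∂^k/∂u₁⋯∂u_k` with respect to the first `k`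
coordinates. -/
def iterPartial {d : ℕ} (k : ℕ) (f : (Fin d → ℝ) → ℝ) : (Fin d → ℝ) → ℝ :=
  ((List.finRange d).take k).foldr coordPartial f

/-- `𝒮_{s,j}`: the set of set-partitions of the ground set `s` into exactly `j` nonempty
blocks, encoded as finsets of pairwise disjoint nonempty blocks whose union is `s`. -/
def setPartitions {d : ℕ} (s : Finset (Fin d)) (j : ℕ) : Finset (Finset (Finset (Fin d))) :=
  Finset.univ.filter fun P =>
    (↑P : Set (Finset (Fin d))).PairwiseDisjoint id ∧
    (∀ M ∈ P, M.Nonempty) ∧ P.sup id = s ∧ P.card = j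

/-- The standard normal density `φ(x) = (2π)^{-1/2} exp(-x²/2)`. -/
def stdNormalPdf (x : ℝ) : ℝ :=
  (Real.sqrt (2 * Real.pi))⁻¹ * Real.exp (-x ^ 2 / 2)

/-- The standard normal cumulative distribution function `Φ`. -/
def stdNormalCdf (x : ℝ) : ℝ :=
  ∫ t in Set.Iic x, stdNormalPdf t

/-!
Write `G(m) = C(Φ(m₁),…,Φ(m_d))`. Differentiating `Gⁿ` once in each coordinate of a set `s`
gives a sum over the set partitions `P` of `s` of `n!/(n-|P|)! · G^(n-|P|) · ∏_{M ∈ P} ∂_M G`: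
differentiating in one more coordinate `i` either hits the power, which opens a new block `{i}`,
or hits the factor of a block `M`, which grows it to `M ∪ {i}`, and these two moves produce every
partition of `s ∪ {i}` exactly once. Since `Φ` acts coordinatewise with `Φ' = φ`, the chain rule
gives `∂_M G(m) = (∏_{l ∈ M} φ(m_l)) · ∂_M C(Φ(m))`, and the blocks of a partition of
`{1,…,d}` together contribute `∏_l φ(m_l)`. Grouping the partitions by their number of blocks
gives the formula.
-/

open scoped ContDiff

lemma stdNormalPdf_eq_gaussianPDFReal : stdNormalPdf = ProbabilityTheory.gaussianPDFReal 0 1 := by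
  funext x
  simp [stdNormalPdf, ProbabilityTheory.gaussianPDFReal]

lemma integrable_stdNormalPdf : MeasureTheory.Integrable stdNormalPdf := by
  rw [stdNormalPdf_eq_gaussianPDFReal]
  exact ProbabilityTheory.integrable_gaussianPDFReal 0 1

lemma stdNormalCdf_mem_Icc (x : ℝ) : stdNormalCdf x ∈ Set.Icc (0 : ℝ) 1 := by
  have hnonneg : ∀ t, 0 ≤ stdNormalPdf t := by
    simp [stdNormalPdf_eq_gaussianPDFReal, ProbabilityTheory.gaussianPDFReal_nonneg]
  have htotal : ∫ t, stdNormalPdf t = 1 := by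
    rw [stdNormalPdf_eq_gaussianPDFReal]
    exact ProbabilityTheory.integral_gaussianPDFReal_eq_one 0 one_ne_zero
  refine ⟨MeasureTheory.setIntegral_nonneg measurableSet_Iic fun t _ => hnonneg t, ?_⟩
  exact htotal ▸ MeasureTheory.setIntegral_le_integral integrable_stdNormalPdf
    (MeasureTheory.ae_of_all _ hnonneg)

lemma hasDerivAt_stdNormalCdf (x : ℝ) : HasDerivAt stdNormalCdf (stdNormalPdf x) x := by
  have hcont : Continuous stdNormalPdf := by unfold stdNormalPdf; fun_prop
  have hΦ : stdNormalCdf = fun y => stdNormalCdf 0 + ∫ t in (0 : ℝ)..y, stdNormalPdf t := by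
    funext y
    rw [← intervalIntegral.integral_Iic_sub_Iic integrable_stdNormalPdf.integrableOn
      integrable_stdNormalPdf.integrableOn, stdNormalCdf, stdNormalCdf]
    ring
  rw [hΦ]
  exact (intervalIntegral.integral_hasDerivAt_right integrable_stdNormalPdf.intervalIntegrable
    (hcont.stronglyMeasurableAtFilter _ _) hcont.continuousAt).const_add _

lemma contDiff_stdNormalCdf : ContDiff ℝ ∞ stdNormalCdf := by
  refine contDiff_infty_iff_deriv.2 ⟨fun x => (hasDerivAt_stdNormalCdf x).differentiableAt, ?_⟩
  rw [show deriv stdNormalCdf = stdNormalPdf from funext fun x => (hasDerivAt_stdNormalCdf x).deriv]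
  unfold stdNormalPdf
  fun_prop

section Partitions

variable {α : Type*} [Fintype α] [DecidableEq α]

def partitionsOf (s : Finset α) : Finset (Finset (Finset α)) :=
  Finset.univ.filter fun P =>
    (↑P : Set (Finset α)).PairwiseDisjoint id ∧ (∀ M ∈ P, M.Nonempty) ∧ P.sup id = s

variable {s : Finset α} {P : Finset (Finset α)} {M : Finset α} {i : α}

lemma mem_partitionsOf :
    P ∈ partitionsOf s ↔
      (↑P : Set (Finset α)).PairwiseDisjoint id ∧ (∀ M ∈ P, M.Nonempty) ∧ P.sup id = s := by
  simp [partitionsOf]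

lemma subset_of_mem_partitionsOf (hP : P ∈ partitionsOf s) (hM : M ∈ P) : M ⊆ s :=
  (mem_partitionsOf.1 hP).2.2 ▸ Finset.le_sup (f := id) hM

lemma partitionsOf_empty : partitionsOf (∅ : Finset α) = {∅} := by
  ext P
  rw [mem_partitionsOf, Finset.mem_singleton]
  constructor
  · rintro ⟨-, hne, hempty⟩
    exact Finset.eq_empty_of_forall_notMem fun M hM => (hne M hM).ne_empty
      (Finset.subset_empty.1 (hempty ▸ Finset.le_sup (f := id) hM))
  · rintro rfl
    simp

lemma prod_prod_of_mem_partitionsOf {β : Type*} [CommMonoid β] (f : α → β)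
    (hP : P ∈ partitionsOf s) : ∏ M ∈ P, ∏ a ∈ M, f a = ∏ a ∈ s, f a := by
  obtain ⟨hdisj, -, rfl⟩ := mem_partitionsOf.1 hP
  rw [Finset.sup_eq_biUnion, Finset.prod_biUnion hdisj]
  rfl

lemma card_le_of_mem_partitionsOf (hP : P ∈ partitionsOf s) : P.card ≤ s.card := by
  obtain ⟨hdisj, hne, rfl⟩ := mem_partitionsOf.1 hP
  rw [Finset.sup_eq_biUnion, Finset.card_biUnion hdisj, Finset.card_eq_sum_ones]
  exact Finset.sum_le_sum fun M hM => (hne M hM).card_pos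

lemma card_pos_of_mem_partitionsOf (hs : s.Nonempty) (hP : P ∈ partitionsOf s) :
    0 < P.card := by
  obtain ⟨-, -, rfl⟩ := mem_partitionsOf.1 hP
  obtain ⟨a, ha⟩ := hs
  obtain ⟨M, hM, -⟩ := Finset.mem_sup.1 ha
  exact Finset.card_pos.2 ⟨M, hM⟩

lemma singleton_notMem_of_mem_partitionsOf (hi : i ∉ s) (hP : P ∈ partitionsOf s) :
    {i} ∉ P := fun h =>
  hi (subset_of_mem_partitionsOf hP h (Finset.mem_singleton_self i))

lemma insert_insert_notMem_erase_of_mem_partitionsOf (hi : i ∉ s) (hP : P ∈ partitionsOf s) :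
    insert i M ∉ P.erase M := fun h =>
  hi (subset_of_mem_partitionsOf hP (Finset.mem_of_mem_erase h) (Finset.mem_insert_self i M))

lemma insert_singleton_mem_partitionsOf (hi : i ∉ s) (hP : P ∈ partitionsOf s) :
    insert {i} P ∈ partitionsOf (insert i s) := by
  have hsub := fun M hM => subset_of_mem_partitionsOf (M := M) hP hM
  obtain ⟨hdisj, hne, hsup⟩ := mem_partitionsOf.1 hP
  refine mem_partitionsOf.2 ⟨?_, ?_, ?_⟩
  · rw [Finset.coe_insert]
    exact hdisj.insert fun M hM _ =>
      Finset.disjoint_singleton_left.2 fun hiM => hi (hsub M hM hiM)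
  · simpa using hne
  · rw [Finset.sup_insert, hsup, Finset.insert_eq]
    rfl

lemma insert_insert_erase_mem_partitionsOf (hi : i ∉ s) (hP : P ∈ partitionsOf s)
    (hM : M ∈ P) : insert (insert i M) (P.erase M) ∈ partitionsOf (insert i s) := by
  have hsub := fun M hM => subset_of_mem_partitionsOf (M := M) hP hM
  obtain ⟨hdisj, hne, hsup⟩ := mem_partitionsOf.1 hP
  refine mem_partitionsOf.2 ⟨?_, ?_, ?_⟩
  · rw [Finset.coe_insert]
    refine (hdisj.subset (Finset.coe_subset.2 (Finset.erase_subset M P))).insert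
      fun M' hM' _ => ?_
    obtain ⟨hM'M, hM'P⟩ := Finset.mem_erase.1 hM'
    exact Finset.disjoint_insert_left.2 ⟨fun hiM' => hi (hsub M' hM'P hiM'),
      hdisj hM hM'P (Ne.symm hM'M)⟩
  · simpa using fun M' _ hM' => hne M' hM'
  · rw [← Finset.insert_erase hM, Finset.sup_insert] at hsup
    rw [Finset.sup_insert, ← hsup]
    simp [Finset.insert_union]

def blockContaining (i : α) (Q : Finset (Finset α)) : Finset α :=
  (Q.filter fun M => i ∈ M).sup id

variable {Q : Finset (Finset α)}

lemma blockContaining_spec (hQ : Q ∈ partitionsOf (insert i s)) :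
    blockContaining i Q ∈ Q ∧ i ∈ blockContaining i Q ∧
      ∀ M ∈ Q, i ∈ M → M = blockContaining i Q := by
  obtain ⟨hdisj, -, hsup⟩ := mem_partitionsOf.1 hQ
  obtain ⟨B, hB, hiB⟩ := Finset.mem_sup.1 (hsup ▸ Finset.mem_insert_self i s)
  have hunique : ∀ M ∈ Q, i ∈ M → M = B := fun M hM hiM => by
    by_contra hMB
    exact Finset.disjoint_left.1 (hdisj hM hB hMB) hiM hiB
  have hfilter : Q.filter (fun M => i ∈ M) = {B} := by
    ext M
    simp only [Finset.mem_filter, Finset.mem_singleton]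
    exact ⟨fun ⟨hM, hiM⟩ => hunique M hM hiM, by rintro rfl; exact ⟨hB, hiB⟩⟩
  have hblock : blockContaining i Q = B := by
    rw [blockContaining, hfilter, Finset.sup_singleton]
    rfl
  exact hblock ▸ ⟨hB, hiB, hunique⟩

lemma erase_blockContaining_union_sup (hi : i ∉ s) (hQ : Q ∈ partitionsOf (insert i s)) :
    (blockContaining i Q).erase i ∪ (Q.erase (blockContaining i Q)).sup id = s := by
  set B := blockContaining i Q
  obtain ⟨hB, -, hunique⟩ := blockContaining_spec hQ
  have hrest : i ∉ (Q.erase B).sup id := fun h => by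
    obtain ⟨M, hM, hiM⟩ := Finset.mem_sup.1 h
    exact (Finset.mem_erase.1 hM).1 (hunique M (Finset.mem_of_mem_erase hM) hiM)
  have hsup := (mem_partitionsOf.1 hQ).2.2
  rw [← Finset.insert_erase hB, Finset.sup_insert] at hsup
  rw [← Finset.erase_eq_of_notMem hrest, ← Finset.erase_union_distrib]
  exact (congrArg (Finset.erase · i) hsup).trans (Finset.erase_insert hi)

lemma erase_singleton_mem_partitionsOf (hi : i ∉ s) (hQ : Q ∈ partitionsOf (insert i s))
    (hiQ : {i} ∈ Q) : Q.erase {i} ∈ partitionsOf s := by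
  have hB : {i} = blockContaining i Q :=
    (blockContaining_spec hQ).2.2 {i} hiQ (Finset.mem_singleton_self i)
  have hsup := erase_blockContaining_union_sup hi hQ
  rw [← hB, Finset.erase_singleton, Finset.empty_union] at hsup
  obtain ⟨hdisj, hne, -⟩ := mem_partitionsOf.1 hQ
  exact mem_partitionsOf.2 ⟨hdisj.subset (Finset.coe_subset.2 (Finset.erase_subset _ _)),
    fun M hM => hne M (Finset.mem_of_mem_erase hM), hsup⟩

lemma erase_blockContaining_nonempty (hQ : Q ∈ partitionsOf (insert i s)) (hiQ : {i} ∉ Q) :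
    ((blockContaining i Q).erase i).Nonempty := by
  obtain ⟨hB, -, -⟩ := blockContaining_spec hQ
  rw [Finset.nonempty_iff_ne_empty, Ne, Finset.erase_eq_empty_iff]
  rintro (hempty | hsingleton)
  · exact ((mem_partitionsOf.1 hQ).2.1 _ hB).ne_empty hempty
  · exact hiQ (hsingleton ▸ hB)

lemma erase_blockContaining_notMem (hQ : Q ∈ partitionsOf (insert i s)) (hiQ : {i} ∉ Q) :
    (blockContaining i Q).erase i ∉ Q.erase (blockContaining i Q) := fun h => by
  obtain ⟨hne, hmem⟩ := Finset.mem_erase.1 h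
  obtain ⟨a, ha⟩ := erase_blockContaining_nonempty hQ hiQ
  exact Finset.disjoint_left.1 ((mem_partitionsOf.1 hQ).1 hmem (blockContaining_spec hQ).1 hne)
    ha (Finset.mem_of_mem_erase ha)

lemma insert_erase_blockContaining_mem_partitionsOf (hi : i ∉ s)
    (hQ : Q ∈ partitionsOf (insert i s)) (hiQ : {i} ∉ Q) :
    insert ((blockContaining i Q).erase i) (Q.erase (blockContaining i Q)) ∈ partitionsOf s := by
  set B := blockContaining i Q
  have hB := (blockContaining_spec hQ).1
  obtain ⟨hdisj, hne, -⟩ := mem_partitionsOf.1 hQ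
  refine mem_partitionsOf.2 ⟨?_, ?_, ?_⟩
  · rw [Finset.coe_insert]
    refine (hdisj.subset (Finset.coe_subset.2 (Finset.erase_subset B Q))).insert
      fun M hM _ => ?_
    obtain ⟨hMB, hMQ⟩ := Finset.mem_erase.1 hM
    exact Finset.disjoint_of_subset_left (Finset.erase_subset i B) (hdisj hB hMQ (Ne.symm hMB))
  · simp only [Finset.mem_insert, forall_eq_or_imp]
    exact ⟨erase_blockContaining_nonempty hQ hiQ, fun M hM => hne M (Finset.mem_of_mem_erase hM)⟩
  · rw [Finset.sup_insert]
    exact erase_blockContaining_union_sup hi hQ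

lemma sum_partitionsOf_insert {β : Type*} [AddCommMonoid β] (hi : i ∉ s)
    (f : Finset (Finset α) → β) :
    ∑ Q ∈ partitionsOf (insert i s), f Q =
      ∑ P ∈ partitionsOf s, (f (insert {i} P) + ∑ M ∈ P, f (insert (insert i M) (P.erase M))) := by
  rw [Finset.sum_add_distrib, ← Finset.sum_filter_add_sum_filter_not _ (fun Q => {i} ∈ Q)]
  congr 1
  · refine (Finset.sum_bij' (fun P _ => insert {i} P) (fun Q _ => Q.erase {i}) ?_ ?_ ?_ ?_ ?_).symm
    · exact fun P hP => Finset.mem_filter.2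
        ⟨insert_singleton_mem_partitionsOf hi hP, Finset.mem_insert_self _ _⟩
    · exact fun Q hQ => erase_singleton_mem_partitionsOf hi (Finset.mem_filter.1 hQ).1
        (Finset.mem_filter.1 hQ).2
    · exact fun P hP => Finset.erase_insert (singleton_notMem_of_mem_partitionsOf hi hP)
    · exact fun Q hQ => Finset.insert_erase (Finset.mem_filter.1 hQ).2
    · exact fun _ _ => rfl
  · rw [Finset.sum_sigma']
    refine (Finset.sum_bij' (fun p _ => insert (insert i p.2) (p.1.erase p.2))
      (fun Q _ => ⟨insert ((blockContaining i Q).erase i) (Q.erase (blockContaining i Q)),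
        (blockContaining i Q).erase i⟩) ?_ ?_ ?_ ?_ ?_).symm
    · rintro ⟨P, M⟩ hPM
      obtain ⟨hP, hM⟩ := Finset.mem_sigma.1 hPM
      refine Finset.mem_filter.2 ⟨insert_insert_erase_mem_partitionsOf hi hP hM, ?_⟩
      rw [Finset.mem_insert, not_or]
      refine ⟨fun h => ?_, fun h => singleton_notMem_of_mem_partitionsOf hi hP
        (Finset.mem_of_mem_erase h)⟩
      obtain ⟨a, ha⟩ := (mem_partitionsOf.1 hP).2.1 M hM
      have hai : a = i := Finset.mem_singleton.1 (h ▸ Finset.mem_insert_of_mem ha)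
      exact hi (hai ▸ subset_of_mem_partitionsOf hP hM ha)
    · intro Q hQ
      obtain ⟨hQ, hiQ⟩ := Finset.mem_filter.1 hQ
      exact Finset.mem_sigma.2
        ⟨insert_erase_blockContaining_mem_partitionsOf hi hQ hiQ, Finset.mem_insert_self _ _⟩
    · rintro ⟨P, M⟩ hPM
      obtain ⟨hP, hM⟩ := Finset.mem_sigma.1 hPM
      have hQ := insert_insert_erase_mem_partitionsOf hi hP hM
      have hB : insert i M = blockContaining i (insert (insert i M) (P.erase M)) :=
        (blockContaining_spec hQ).2.2 _ (Finset.mem_insert_self _ _) (Finset.mem_insert_self i M)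
      have hiM : i ∉ M := fun h => hi (subset_of_mem_partitionsOf hP hM h)
      simp only [← hB, Finset.erase_insert hiM,
        Finset.erase_insert (insert_insert_notMem_erase_of_mem_partitionsOf hi hP),
        Finset.insert_erase hM]
    · intro Q hQ
      obtain ⟨hQ, hiQ⟩ := Finset.mem_filter.1 hQ
      obtain ⟨hB, hiB, -⟩ := blockContaining_spec hQ
      simp only [Finset.erase_insert (erase_blockContaining_notMem hQ hiQ),
        Finset.insert_erase hiB, Finset.insert_erase hB]
    · exact fun _ _ => rfl

end Partitions

lemma descFactorial_eq_factorial_div {n j : ℕ} (hj : j ≤ n) :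
    (n.descFactorial j : ℝ) = n.factorial / (n - j).factorial := by
  rw [eq_div_iff (by positivity), ← Nat.factorial_mul_descFactorial hj]
  push_cast
  ring

lemma sum_partitionsOf_eq_sum_setPartitions {d n : ℕ} {s : Finset (Fin d)} (hs : s.Nonempty)
    (c : ℝ) (g : Finset (Fin d) → ℝ) :
    ∑ P ∈ partitionsOf s, (n.descFactorial P.card : ℝ) * c ^ (n - P.card) * ∏ M ∈ P, g M =
      ∑ j ∈ Finset.Icc 1 (min s.card n),
        (n.factorial : ℝ) / ((n - j).factorial : ℝ) * c ^ (n - j) *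
          ∑ P ∈ setPartitions s j, ∏ M ∈ P, g M := by
  rw [← Finset.sum_filter_of_ne (p := fun P => P.card ≤ n) fun P _ hP => by
    by_contra hlt
    simp [Nat.descFactorial_eq_zero_iff_lt.2 (not_le.1 hlt)] at hP]
  rw [← Finset.sum_fiberwise_of_maps_to (t := Finset.Icc 1 (min s.card n)) (g := Finset.card)
    fun P hP => by
      obtain ⟨hP, hPn⟩ := Finset.mem_filter.1 hP
      exact Finset.mem_Icc.2 ⟨card_pos_of_mem_partitionsOf hs hP,
        le_min (card_le_of_mem_partitionsOf hP) hPn⟩]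
  refine Finset.sum_congr rfl fun j hj => ?_
  have hjn : j ≤ n := (Finset.mem_Icc.1 hj).2.trans (min_le_right _ _)
  have hfilter : {P ∈ {P ∈ partitionsOf s | P.card ≤ n} | P.card = j} = setPartitions s j := by
    ext P
    simp only [partitionsOf, setPartitions, Finset.mem_filter, Finset.mem_univ, true_and]
    constructor
    · exact fun ⟨⟨h, _⟩, hj⟩ => ⟨h.1, h.2.1, h.2.2, hj⟩
    · exact fun ⟨h1, h2, h3, hj⟩ => ⟨⟨⟨h1, h2, h3⟩, hj ▸ hjn⟩, hj⟩
  rw [hfilter, Finset.mul_sum, ← descFactorial_eq_factorial_div hjn]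
  refine Finset.sum_congr rfl fun P hP => ?_
  rw [(Finset.mem_filter.1 hP).2.2.2.2]

section PartialDerivatives

variable {d : ℕ} {F : (Fin d → ℝ) → ℝ} {U : Set (Fin d → ℝ)} {x : Fin d → ℝ}

lemma hasDerivAt_update_fderiv (i : Fin d) (hF : DifferentiableAt ℝ F x) :
    HasDerivAt (fun t => F (Function.update x i t)) (fderiv ℝ F x (Pi.single i 1)) (x i) := by
  have hF' : HasFDerivAt F (fderiv ℝ F x) (Function.update x i (x i)) := by
    rw [Function.update_eq_self]
    exact hF.hasFDerivAt
  exact hF'.comp_hasDerivAt (x i) (hasDerivAt_update x i (x i))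

lemma coordPartial_eq_fderiv (i : Fin d) (hF : DifferentiableAt ℝ F x) :
    coordPartial i F x = fderiv ℝ F x (Pi.single i 1) :=
  (hasDerivAt_update_fderiv i hF).deriv

lemma hasDerivAt_update_coordPartial (i : Fin d) (hF : DifferentiableAt ℝ F x) :
    HasDerivAt (fun t => F (Function.update x i t)) (coordPartial i F x) (x i) :=
  (hasDerivAt_update_fderiv i hF).differentiableAt.hasDerivAt

lemma contDiffOn_coordPartial (hU : IsOpen U) {k : ℕ} (hF : ContDiffOn ℝ (k + 1 : ℕ) F U)
    (i : Fin d) : ContDiffOn ℝ k (coordPartial i F) U := by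
  have hfderiv : ContDiffOn ℝ k (fun x => fderiv ℝ F x (Pi.single i 1)) U :=
    (hF.fderiv_of_isOpen hU (by push_cast; rfl)).clm_apply contDiffOn_const
  refine hfderiv.congr fun x hx => coordPartial_eq_fderiv i ?_
  exact (hF.differentiableOn (by simp)).differentiableAt (hU.mem_nhds hx)

lemma mixedPartial_empty (F : (Fin d → ℝ) → ℝ) : mixedPartial ∅ F = F := by
  rw [mixedPartial, Finset.sort_empty]
  rfl

lemma mixedPartial_insert_of_lt {i : Fin d} {M : Finset (Fin d)} (hiM : ∀ b ∈ M, i < b)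
    (F : (Fin d → ℝ) → ℝ) : mixedPartial (insert i M) F = coordPartial i (mixedPartial M F) := by
  rw [mixedPartial, Finset.sort_insert _ (fun b hb => (hiM b hb).le)
    fun h => lt_irrefl i (hiM i h)]
  rfl

lemma mixedPartial_singleton (i : Fin d) (F : (Fin d → ℝ) → ℝ) :
    mixedPartial {i} F = coordPartial i F := by
  rw [← Finset.insert_empty, mixedPartial_insert_of_lt (by simp), mixedPartial_empty]

lemma contDiffOn_mixedPartial (hU : IsOpen U) {k : ℕ} (hF : ContDiffOn ℝ k F U)
    (M : Finset (Fin d)) (hM : M.card ≤ k) :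
    ContDiffOn ℝ (k - M.card : ℕ) (mixedPartial M F) U := by
  induction M using Finset.induction_on_min with
  | empty => simpa [mixedPartial_empty] using hF
  | insert i M hiM ih =>
    have hi : i ∉ M := fun h => lt_irrefl i (hiM i h)
    rw [Finset.card_insert_of_notMem hi] at hM
    rw [mixedPartial_insert_of_lt hiM, Finset.card_insert_of_notMem hi]
    refine contDiffOn_coordPartial hU ?_ i
    convert ih (by omega) using 2
    omega

lemma differentiableAt_mixedPartial (hU : IsOpen U) {k : ℕ} (hF : ContDiffOn ℝ k F U)
    {M : Finset (Fin d)} (hM : M.card < k) (hx : x ∈ U) :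
    DifferentiableAt ℝ (mixedPartial M F) x := by
  have h := contDiffOn_mixedPartial hU hF M hM.le
  refine (h.differentiableOn ?_).differentiableAt (hU.mem_nhds hx)
  exact_mod_cast (Nat.sub_pos_of_lt hM).ne'

end PartialDerivatives

section CoordinatewiseChainRule

variable {d : ℕ} {g g' : ℝ → ℝ}

lemma hasDerivAt_update_comp_coordwise {F : (Fin d → ℝ) → ℝ} {x : Fin d → ℝ} (i : Fin d)
    (hg : HasDerivAt g (g' (x i)) (x i)) (hF : DifferentiableAt ℝ F fun l => g (x l)) :
    HasDerivAt (fun t => F fun l => g (Function.update x i t l))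
      (coordPartial i F (fun l => g (x l)) * g' (x i)) (x i) := by
  have h := (hasDerivAt_update_coordPartial i hF).comp (x i) hg
  refine h.congr_of_eventuallyEq (Filter.Eventually.of_forall fun t => ?_)
  change F (g ∘ Function.update x i t) = F (Function.update (g ∘ x) i (g t))
  rw [Function.comp_update]

lemma mixedPartial_comp_coordwise {C : (Fin d → ℝ) → ℝ} {U : Set (Fin d → ℝ)} (hU : IsOpen U)
    {k : ℕ} (hC : ContDiffOn ℝ k C U) (hg : ∀ t, HasDerivAt g (g' t) t)
    (hgU : ∀ y : Fin d → ℝ, (fun l => g (y l)) ∈ U) (M : Finset (Fin d)) (hM : M.card ≤ k)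
    (x : Fin d → ℝ) :
    mixedPartial M (fun y => C fun l => g (y l)) x =
      (∏ l ∈ M, g' (x l)) * mixedPartial M C (fun l => g (x l)) := by
  induction M using Finset.induction_on_min generalizing x with
  | empty => simp [mixedPartial_empty]
  | insert i M hiM ih =>
    have hi : i ∉ M := fun h => lt_irrefl i (hiM i h)
    rw [Finset.card_insert_of_notMem hi] at hM
    have hline : (fun t => mixedPartial M (fun y => C fun l => g (y l)) (Function.update x i t)) =
        fun t => (∏ l ∈ M, g' (x l)) *
          mixedPartial M C (fun l => g (Function.update x i t l)) := by
      funext t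
      rw [ih (by omega)]
      congr 1
      exact Finset.prod_congr rfl fun l hl => by
        rw [Function.update_of_ne (ne_of_mem_of_not_mem hl hi)]
    have hderiv := (hasDerivAt_update_comp_coordwise i (hg (x i))
      (differentiableAt_mixedPartial (M := M) hU hC (by omega) (hgU x))).const_mul
        (∏ l ∈ M, g' (x l))
    rw [mixedPartial_insert_of_lt hiM, mixedPartial_insert_of_lt hiM, Finset.prod_insert hi]
    change deriv _ (x i) = _
    rw [hline, hderiv.deriv]
    ring

end CoordinatewiseChainRule

section PowerRule

variable {d : ℕ}

def powPartitionTerm (G : (Fin d → ℝ) → ℝ) (n : ℕ) (P : Finset (Finset (Fin d)))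
    (x : Fin d → ℝ) : ℝ :=
  n.descFactorial P.card * G x ^ (n - P.card) * ∏ M ∈ P, mixedPartial M G x

variable {G : (Fin d → ℝ) → ℝ} {k n : ℕ} {s : Finset (Fin d)} {P : Finset (Finset (Fin d))}
  {i : Fin d}

lemma hasDerivAt_update_powPartitionTerm (hG : ContDiff ℝ k G) (hs : s.card < k)
    (hP : P ∈ partitionsOf s) (hi : ∀ b ∈ s, i < b) (x : Fin d → ℝ) :
    HasDerivAt (fun t => powPartitionTerm G n P (Function.update x i t))
      (powPartitionTerm G n (insert {i} P) x +
        ∑ M ∈ P, powPartitionTerm G n (insert (insert i M) (P.erase M)) x) (x i) := by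
  have his : i ∉ s := fun h => lt_irrefl i (hi i h)
  have hsub : ∀ M ∈ P, M ⊆ s := fun M hM => subset_of_mem_partitionsOf hP hM
  have hdiff : ∀ M ∈ P, DifferentiableAt ℝ (mixedPartial M G) x := fun M hM =>
    differentiableAt_mixedPartial isOpen_univ hG.contDiffOn
      ((Finset.card_le_card (hsub M hM)).trans_lt hs) (Set.mem_univ x)
  have hpow := (hasDerivAt_update_coordPartial (x := x) i
    (hG.differentiable (by exact_mod_cast (Nat.zero_lt_of_lt hs).ne') x)).fun_pow (n - P.card)
  have hprod := HasDerivAt.fun_finsetProd fun M hM =>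
    hasDerivAt_update_coordPartial (F := mixedPartial M G) (x := x) i (hdiff M hM)
  refine (((hpow.mul hprod).const_mul (n.descFactorial P.card : ℝ)).congr_of_eventuallyEq
    (Filter.Eventually.of_forall fun t => ?_)).congr_deriv ?_
  · simp only [powPartitionTerm, Pi.mul_apply, mul_assoc]
  have hsingleton : {i} ∉ P := singleton_notMem_of_mem_partitionsOf his hP
  have hgrow : ∀ M ∈ P, powPartitionTerm G n (insert (insert i M) (P.erase M)) x =
      n.descFactorial P.card * G x ^ (n - P.card) *
        ((∏ M' ∈ P.erase M, mixedPartial M' G x) * coordPartial i (mixedPartial M G) x) := by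
    intro M hM
    have hnotMem := insert_insert_notMem_erase_of_mem_partitionsOf (M := M) his hP
    have hcard : (insert (insert i M) (P.erase M)).card = P.card := by
      rw [Finset.card_insert_of_notMem hnotMem, Finset.card_erase_add_one hM]
    rw [powPartitionTerm, hcard, Finset.prod_insert hnotMem,
      mixedPartial_insert_of_lt fun b hb => hi b (hsub M hM hb)]
    ring
  rw [Finset.sum_congr rfl hgrow, powPartitionTerm, Finset.card_insert_of_notMem hsingleton,
    Finset.prod_insert hsingleton, mixedPartial_singleton, Nat.descFactorial_succ,
    ← Finset.mul_sum, show n - P.card - 1 = n - (P.card + 1) by omega]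
  simp only [Function.update_eq_self, smul_eq_mul, Nat.cast_mul]
  ring

theorem mixedPartial_pow (hG : ContDiff ℝ k G) (n : ℕ) (s : Finset (Fin d)) (hs : s.card ≤ k) :
    mixedPartial s (fun y => G y ^ n) =
      fun x => ∑ P ∈ partitionsOf s, powPartitionTerm G n P x := by
  induction s using Finset.induction_on_min with
  | empty =>
    funext x
    simp [mixedPartial_empty, partitionsOf_empty, powPartitionTerm]
  | insert i s hi ih =>
    have his : i ∉ s := fun h => lt_irrefl i (hi i h)
    rw [Finset.card_insert_of_notMem his] at hs
    funext x
    rw [mixedPartial_insert_of_lt hi, ih (by omega), sum_partitionsOf_insert his]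
    exact (HasDerivAt.fun_sum fun P hP =>
      hasDerivAt_update_powPartitionTerm (n := n) hG (by omega) hP hi x).deriv

end PowerRule

lemma iterPartial_eq_mixedPartial_univ {d : ℕ} (F : (Fin d → ℝ) → ℝ) :
    iterPartial d F = mixedPartial Finset.univ F := by
  rw [iterPartial, mixedPartial, Fin.sort_univ, List.take_of_length_le (by simp)]

theorem blockMaxima_zscale_density_general (d n : ℕ) (hd : 1 ≤ d)
    (C : (Fin d → ℝ) → ℝ)
    (U : Set (Fin d → ℝ)) (hU : IsOpen U) (hUsub : Set.Icc (0 : Fin d → ℝ) 1 ⊆ U)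
    (hC : ContDiffOn ℝ d C U)
    (m : Fin d → ℝ) :
    iterPartial d (fun v => C (fun i => stdNormalCdf (v i)) ^ n) m =
      (∏ j, stdNormalPdf (m j)) *
        ∑ j ∈ Finset.Icc 1 (min d n),
          (n.factorial : ℝ) / ((n - j).factorial : ℝ) *
            C (fun i => stdNormalCdf (m i)) ^ (n - j) *
            ∑ P ∈ setPartitions (Finset.univ : Finset (Fin d)) j,
              ∏ M ∈ P, mixedPartial M C (fun i => stdNormalCdf (m i)) := by
  have hΦU : ∀ y : Fin d → ℝ, (fun l => stdNormalCdf (y l)) ∈ U := fun y =>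
    hUsub ⟨fun l => (stdNormalCdf_mem_Icc (y l)).1, fun l => (stdNormalCdf_mem_Icc (y l)).2⟩
  have hG : ContDiff ℝ d fun y : Fin d → ℝ => C fun l => stdNormalCdf (y l) :=
    hC.comp_contDiff (contDiff_pi.2 fun l =>
      (contDiff_stdNormalCdf.of_le (by exact_mod_cast le_top)).comp (contDiff_apply ℝ ℝ l)) hΦU
  have hchain (M : Finset (Fin d)) :
      mixedPartial M (fun y => C fun l => stdNormalCdf (y l)) m =
        (∏ l ∈ M, stdNormalPdf (m l)) * mixedPartial M C (fun l => stdNormalCdf (m l)) :=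
    mixedPartial_comp_coordwise hU hC hasDerivAt_stdNormalCdf hΦU M
      (M.card_le_univ.trans_eq (Fintype.card_fin d)) m
  have hregroup := sum_partitionsOf_eq_sum_setPartitions (n := n)
    (Finset.univ_nonempty_iff.2 ⟨⟨0, hd⟩⟩) (C fun l => stdNormalCdf (m l))
    fun M => mixedPartial M C fun l => stdNormalCdf (m l)
  rw [Finset.card_univ, Fintype.card_fin] at hregroup
  rw [iterPartial_eq_mixedPartial_univ, mixedPartial_pow hG n _ (by simp), ← hregroup,
    Finset.mul_sum]
  refine Finset.sum_congr rfl fun P hP => ?_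
  simp only [powPartitionTerm, hchain, Finset.prod_mul_distrib,
    prod_prod_of_mem_partitionsOf _ hP]
  ring

/-- Corollary 1 of the paper: the `d`-fold mixed partial derivative
`∂^d/∂m₁⋯∂m_d` of `m ↦ C(Φ(m₁),…,Φ(m_d))^n` — the joint density of the componentwise
block-maxima on the marginally standard-normal scale — equals
`(∏ⱼ φ(mⱼ)) ∑_{j=1}^{d∧n} (n!/(n-j)!) C(Φ(m))^{n-j} ∑_{𝒫∈𝒮_{d,j}} ∏_{M∈𝒫} ∂_M C(Φ(m))`. -/
theorem blockMaxima_zscale_density (d n : ℕ) (hd : 1 ≤ d) (hn : 1 ≤ n)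
    (C : (Fin d → ℝ) → ℝ)
    (U : Set (Fin d → ℝ)) (hU : IsOpen U) (hUsub : Set.Icc (0 : Fin d → ℝ) 1 ⊆ U)
    (hC : ContDiffOn ℝ d C U)
    (m : Fin d → ℝ) :
    iterPartial d (fun v => C (fun i => stdNormalCdf (v i)) ^ n) m =
      (∏ j, stdNormalPdf (m j)) *
        ∑ j ∈ Finset.Icc 1 (min d n),
          (n.factorial : ℝ) / ((n - j).factorial : ℝ) *
            C (fun i => stdNormalCdf (m i)) ^ (n - j) *
            ∑ P ∈ setPartitions (Finset.univ : Finset (Fin d)) j,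
              ∏ M ∈ P, mixedPartial M C (fun i => stdNormalCdf (m i)) :=
  blockMaxima_zscale_density_general d n hd C U hU hUsub hC m

end
end

section
/- For all (u_1,u_2,u_3) with u_3 ∈ (0,1) and u_1,u_2 ∈ [0,1], the partial derivative of the three-dimensional vine copula C with respect to u_3 satisfies ∂C(u_1,u_2,u_3)/∂u_3 = ∫_0^{u_2} ∂₃C_{13;2}( C_{1|2}(u_1|v_2), C_{3|2}(u_3|v_2) ) · c_{23}(v_2,u_3) dv_2. -/
/-! After Fubini puts the `v₃`-integral outermost, the fundamental theorem of calculus gives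
`∂C/∂u₃ = ∫₀^{u₁}∫₀^{u₂} (integrand at v₃ = u₃)`; the integrand is only continuous on the cube
`[0,1]³`, so it is first extended continuously by clamping the coordinates to `[0,1]`.
In the remaining `v₁`-integral, `c₁₂(v₁,v₂) = ∂_{v₁} C_{1|2}(v₁|v₂)` and
`c₁₃;₂(x,y) = ∂_x ∂₃C₁₃;₂(x,y)`, so by the chain rule the integrand is the `v₁`-derivative of
`∂₃C₁₃;₂(C_{1|2}(v₁|v₂), C_{3|2}(u₃|v₂))`. Its value at `v₁ = 0` vanishes, because the boundary
conditions give `C_{1|2}(0|v₂) = 0` and `∂₃C₁₃;₂(0,y) = 0`. -/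

noncomputable section

/-- The density of a bivariate copula: the mixed second partial derivative `∂²C/∂s∂t`. -/
def copDens (C : ℝ × ℝ → ℝ) (s t : ℝ) : ℝ :=
  deriv (fun a => deriv (fun b => C (a, b)) t) s

/-- The conditional distribution function `C_{1|2}(u₁|u₂) = ∂C₁₂(u₁,u₂)/∂u₂`. -/
def cond12 (C12 : ℝ × ℝ → ℝ) (u1 u2 : ℝ) : ℝ :=
  deriv (fun b => C12 (u1, b)) u2

/-- The conditional distribution function `C_{3|2}(u₃|u₂) = ∂C₂₃(u₂,u₃)/∂u₂`. -/
def cond32 (C23 : ℝ × ℝ → ℝ) (u3 u2 : ℝ) : ℝ :=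
  deriv (fun a => C23 (a, u3)) u2

/-- `∂₁C(x,y) = ∂C(x,y)/∂x`. -/
def pdFst (C : ℝ × ℝ → ℝ) (x y : ℝ) : ℝ := deriv (fun a => C (a, y)) x

/-- `∂₃C(x,y) = ∂C(x,y)/∂y` (derivative in the second argument). -/
def pdSnd (C : ℝ × ℝ → ℝ) (x y : ℝ) : ℝ := deriv (fun b => C (x, b)) y

/-- The three-dimensional vine copula built from the pair copulas `C₁₂, C₂₃, C₁₃;₂`:
`C(u₁,u₂,u₃) = ∫₀^{u₁}∫₀^{u₂}∫₀^{u₃} c₁₂(v₁,v₂) c₂₃(v₂,v₃)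
  c₁₃;₂(C_{1|2}(v₁|v₂), C_{3|2}(v₃|v₂)) dv₃ dv₂ dv₁`. -/
def vine (C12 C23 C132 : ℝ × ℝ → ℝ) (u1 u2 u3 : ℝ) : ℝ :=
  ∫ v1 in (0:ℝ)..u1, ∫ v2 in (0:ℝ)..u2, ∫ v3 in (0:ℝ)..u3,
    copDens C12 v1 v2 * copDens C23 v2 v3 *
      copDens C132 (cond12 C12 v1 v2) (cond32 C23 v3 v2)

open Set Filter Topology Function

section PartialDerivatives

variable {E : Type*} [NormedAddCommGroup E] [NormedSpace ℝ E] {f : ℝ × ℝ → E} {a b : ℝ}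

lemma hasDerivAt_comp_mk_left (h : DifferentiableAt ℝ f (a, b)) :
    HasDerivAt (fun t => f (t, b)) (fderiv ℝ f (a, b) (1, 0)) a :=
  h.hasFDerivAt.comp_hasDerivAt a ((hasDerivAt_id a).prodMk (hasDerivAt_const a b))

lemma hasDerivAt_comp_mk_right (h : DifferentiableAt ℝ f (a, b)) :
    HasDerivAt (fun t => f (a, t)) (fderiv ℝ f (a, b) (0, 1)) b :=
  h.hasFDerivAt.comp_hasDerivAt b ((hasDerivAt_const b a).prodMk (hasDerivAt_id b))

end PartialDerivatives

section CopulaDerivatives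

variable {C : ℝ × ℝ → ℝ} {U : Set (ℝ × ℝ)} {a b : ℝ}

lemma pdFst_eq_fderiv (h : DifferentiableAt ℝ C (a, b)) :
    pdFst C a b = fderiv ℝ C (a, b) (1, 0) :=
  (hasDerivAt_comp_mk_left h).deriv

lemma pdSnd_eq_fderiv (h : DifferentiableAt ℝ C (a, b)) :
    pdSnd C a b = fderiv ℝ C (a, b) (0, 1) :=
  (hasDerivAt_comp_mk_right h).deriv

lemma continuousOn_pdFst (hU : IsOpen U) (hC : ContDiffOn ℝ 1 C U) :
    ContinuousOn (fun p : ℝ × ℝ => pdFst C p.1 p.2) U :=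
  ((hC.continuousOn_fderiv_of_isOpen hU le_rfl).clm_apply continuousOn_const).congr fun _ hp =>
    pdFst_eq_fderiv ((hC.differentiableOn one_ne_zero).differentiableAt (hU.mem_nhds hp))

lemma continuousOn_pdSnd (hU : IsOpen U) (hC : ContDiffOn ℝ 1 C U) :
    ContinuousOn (fun p : ℝ × ℝ => pdSnd C p.1 p.2) U :=
  ((hC.continuousOn_fderiv_of_isOpen hU le_rfl).clm_apply continuousOn_const).congr fun _ hp =>
    pdSnd_eq_fderiv ((hC.differentiableOn one_ne_zero).differentiableAt (hU.mem_nhds hp))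

lemma pdSnd_eventuallyEq_fderiv (hU : IsOpen U) (hC : DifferentiableOn ℝ C U)
    (hab : (a, b) ∈ U) :
    (fun t => pdSnd C t b) =ᶠ[𝓝 a] fun t => fderiv ℝ C (t, b) (0, 1) := by
  have hnear : ∀ᶠ t in 𝓝 a, (t, b) ∈ U :=
    (continuous_id.prodMk continuous_const).continuousAt.preimage_mem_nhds (hU.mem_nhds hab)
  filter_upwards [hnear] with t ht
  exact pdSnd_eq_fderiv (hC.differentiableAt (hU.mem_nhds ht))

lemma contDiffOn_fderiv_apply (hU : IsOpen U) (hC : ContDiffOn ℝ 2 C U) (v : ℝ × ℝ) :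
    ContDiffOn ℝ 1 (fun p => fderiv ℝ C p v) U :=
  (hC.fderiv_of_isOpen hU (by norm_num)).clm_apply contDiffOn_const

lemma copDens_eq_fderiv_fderiv (hU : IsOpen U) (hC : ContDiffOn ℝ 2 C U) (hab : (a, b) ∈ U) :
    copDens C a b = fderiv ℝ (fun p => fderiv ℝ C p (0, 1)) (a, b) (1, 0) := by
  have hD := contDiffOn_fderiv_apply hU hC (0, 1)
  have hdiff := (hD.differentiableOn one_ne_zero).differentiableAt (hU.mem_nhds hab)
  exact (pdSnd_eventuallyEq_fderiv hU (hC.differentiableOn (by norm_num)) hab).deriv_eq.trans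
    (hasDerivAt_comp_mk_left hdiff).deriv

lemma hasDerivAt_pdSnd_left (hU : IsOpen U) (hC : ContDiffOn ℝ 2 C U) (hab : (a, b) ∈ U) :
    HasDerivAt (fun t => pdSnd C t b) (copDens C a b) a := by
  have hD := contDiffOn_fderiv_apply hU hC (0, 1)
  have hdiff := (hD.differentiableOn one_ne_zero).differentiableAt (hU.mem_nhds hab)
  rw [copDens_eq_fderiv_fderiv hU hC hab]
  exact (hasDerivAt_comp_mk_left hdiff).congr_of_eventuallyEq
    (pdSnd_eventuallyEq_fderiv hU (hC.differentiableOn (by norm_num)) hab)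

lemma continuousOn_copDens (hU : IsOpen U) (hC : ContDiffOn ℝ 2 C U) :
    ContinuousOn (fun p : ℝ × ℝ => copDens C p.1 p.2) U :=
  (((contDiffOn_fderiv_apply hU hC (0, 1)).continuousOn_fderiv_of_isOpen hU le_rfl).clm_apply
    continuousOn_const).congr fun _ hp => copDens_eq_fderiv_fderiv hU hC hp

lemma pdSnd_eq_zero_of_eqOn_Icc {x c d t : ℝ} (hcd : c < d) (hC : DifferentiableAt ℝ C (x, t))
    (h0 : ∀ s ∈ Icc c d, C (x, s) = 0) (ht : t ∈ Icc c d) : pdSnd C x t = 0 := by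
  have hdiff : DifferentiableAt ℝ (fun s => C (x, s)) t :=
    (hasDerivAt_comp_mk_right hC).differentiableAt
  rw [pdSnd, ← hdiff.derivWithin (uniqueDiffOn_Icc hcd t ht), derivWithin_congr h0 (h0 t ht),
    derivWithin_fun_const]
  rfl

end CopulaDerivatives

section IteratedIntegrals

lemma uIcc_zero_subset_Icc {t : ℝ} (ht : t ∈ Icc (0 : ℝ) 1) : uIcc 0 t ⊆ Icc 0 1 :=
  uIcc_subset_Icc (left_mem_Icc.2 zero_le_one) ht

lemma intervalIntegral_swap_of_continuousOn {F : ℝ → ℝ → ℝ} {a b c d : ℝ}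
    (hF : ContinuousOn (uncurry F) (uIcc a b ×ˢ uIcc c d)) :
    ∫ x in a..b, ∫ y in c..d, F x y = ∫ y in c..d, ∫ x in a..b, F x y :=
  MeasureTheory.intervalIntegral_intervalIntegral_swap
    ((hF.integrableOn_compact (isCompact_uIcc.prod isCompact_uIcc)).mono_set
      (prod_mono uIoc_subset_uIcc uIoc_subset_uIcc))

lemma hasDerivAt_integral_integral_integral {f : ℝ → ℝ → ℝ → ℝ}
    (hf : Continuous fun p : ℝ × ℝ × ℝ => f p.1 p.2.1 p.2.2) (a b c : ℝ) :
    HasDerivAt (fun z => ∫ x in 0..a, ∫ y in 0..b, ∫ w in 0..z, f x y w)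
      (∫ x in 0..a, ∫ y in 0..b, f x y c) c := by
  have hf₁ : Continuous (uncurry fun x w => ∫ y in 0..b, f x y w) :=
    intervalIntegral.continuous_parametric_intervalIntegral_of_continuous'
      (f := fun (p : ℝ × ℝ) y => f p.1 y p.2)
      (hf.comp (by fun_prop : Continuous fun q : (ℝ × ℝ) × ℝ => (q.1.1, q.2, q.1.2))) _ _
  have hG : Continuous fun w => ∫ x in 0..a, ∫ y in 0..b, f x y w :=
    intervalIntegral.continuous_parametric_intervalIntegral_of_continuous'
      (f := fun w x => ∫ y in 0..b, f x y w) (hf₁.comp continuous_swap) _ _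
  have hswap : ∀ z, ∫ x in 0..a, ∫ y in 0..b, ∫ w in 0..z, f x y w
      = ∫ w in 0..z, ∫ x in 0..a, ∫ y in 0..b, f x y w := fun z => by
    calc ∫ x in 0..a, ∫ y in 0..b, ∫ w in 0..z, f x y w
        = ∫ x in 0..a, ∫ w in 0..z, ∫ y in 0..b, f x y w := by
          congr! 2 with x
          exact intervalIntegral_swap_of_continuousOn
            (F := fun y w => f x y w)
            (hf.comp (by fun_prop : Continuous fun q : ℝ × ℝ => (x, q.1, q.2))).continuousOn
      _ = ∫ w in 0..z, ∫ x in 0..a, ∫ y in 0..b, f x y w :=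
          intervalIntegral_swap_of_continuousOn hf₁.continuousOn
  simpa only [hswap] using (hG.integral_hasStrictDerivAt 0 c).hasDerivAt

lemma hasDerivAt_integral_integral_integral_of_continuousOn {f : ℝ → ℝ → ℝ → ℝ}
    (hf : ContinuousOn (fun p : ℝ × ℝ × ℝ => f p.1 p.2.1 p.2.2)
      (Icc 0 1 ×ˢ Icc 0 1 ×ˢ Icc 0 1))
    {a b c : ℝ} (ha : a ∈ Icc (0 : ℝ) 1) (hb : b ∈ Icc (0 : ℝ) 1) (hc : c ∈ Ioo (0 : ℝ) 1) :
    HasDerivAt (fun z => ∫ x in 0..a, ∫ y in 0..b, ∫ w in 0..z, f x y w)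
      (∫ x in 0..a, ∫ y in 0..b, f x y c) c := by
  set π : ℝ → ℝ := fun x => projIcc 0 1 zero_le_one x
  have hπ : ∀ {x}, x ∈ Icc (0 : ℝ) 1 → π x = x := fun hx =>
    congrArg Subtype.val (projIcc_of_mem _ hx)
  have hπmem : ∀ x, π x ∈ Icc (0 : ℝ) 1 := fun x => (projIcc 0 1 zero_le_one x).2
  have hπc : Continuous π := continuous_subtype_val.comp continuous_projIcc
  have hF : Continuous fun p : ℝ × ℝ × ℝ => f (π p.1) (π p.2.1) (π p.2.2) :=
    hf.comp_continuous (f := fun p : ℝ × ℝ × ℝ => (π p.1, π p.2.1, π p.2.2)) (by fun_prop)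
      fun p => ⟨hπmem _, hπmem _, hπmem _⟩
  have hFf : ∀ {x y w}, x ∈ uIcc 0 a → y ∈ uIcc 0 b → w ∈ Icc (0 : ℝ) 1 →
      f (π x) (π y) (π w) = f x y w := fun hx hy hw => by
    rw [hπ (uIcc_zero_subset_Icc ha hx), hπ (uIcc_zero_subset_Icc hb hy), hπ hw]
  have hderiv :=
    hasDerivAt_integral_integral_integral (f := fun x y w => f (π x) (π y) (π w)) hF a b c
  rw [intervalIntegral.integral_congr fun x hx => intervalIntegral.integral_congr fun y hy =>
    hFf hx hy (Ioo_subset_Icc_self hc)] at hderiv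
  refine hderiv.congr_of_eventuallyEq ?_
  filter_upwards [isOpen_Ioo.mem_nhds hc] with z hz
  exact intervalIntegral.integral_congr fun x hx => intervalIntegral.integral_congr fun y hy =>
    intervalIntegral.integral_congr fun w hw =>
      (hFf hx hy (uIcc_zero_subset_Icc (Ioo_subset_Icc_self hz) hw)).symm

end IteratedIntegrals

section Vine

variable {C12 C23 C132 : ℝ × ℝ → ℝ} {U : Set (ℝ × ℝ)}

def vineDensity (C12 C23 C132 : ℝ × ℝ → ℝ) (v1 v2 v3 : ℝ) : ℝ :=
  copDens C12 v1 v2 * copDens C23 v2 v3 * copDens C132 (cond12 C12 v1 v2) (cond32 C23 v3 v2)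

lemma continuousOn_vineDensity (hU : IsOpen U) (hUsub : Icc (0 : ℝ) 1 ×ˢ Icc (0 : ℝ) 1 ⊆ U)
    (h12 : ContDiffOn ℝ 2 C12 U) (h23 : ContDiffOn ℝ 2 C23 U) (h132 : ContDiffOn ℝ 2 C132 U)
    (hr12 : ∀ u1 ∈ Icc (0 : ℝ) 1, ∀ u2 ∈ Icc (0 : ℝ) 1, cond12 C12 u1 u2 ∈ Icc (0 : ℝ) 1)
    (hr32 : ∀ u3 ∈ Icc (0 : ℝ) 1, ∀ u2 ∈ Icc (0 : ℝ) 1, cond32 C23 u3 u2 ∈ Icc (0 : ℝ) 1) :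
    ContinuousOn (fun p : ℝ × ℝ × ℝ => vineDensity C12 C23 C132 p.1 p.2.1 p.2.2)
      (Icc 0 1 ×ˢ Icc 0 1 ×ˢ Icc 0 1) := by
  have h₁₂ : MapsTo (fun p : ℝ × ℝ × ℝ => (p.1, p.2.1)) (Icc 0 1 ×ˢ Icc 0 1 ×ˢ Icc 0 1) U :=
    fun _ hp => hUsub ⟨hp.1, hp.2.1⟩
  have h₂₃ : MapsTo (fun p : ℝ × ℝ × ℝ => (p.2.1, p.2.2)) (Icc 0 1 ×ˢ Icc 0 1 ×ˢ Icc 0 1) U :=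
    fun _ hp => hUsub ⟨hp.2.1, hp.2.2⟩
  have hcond : ContinuousOn
      (fun p : ℝ × ℝ × ℝ => (cond12 C12 p.1 p.2.1, cond32 C23 p.2.2 p.2.1))
      (Icc 0 1 ×ˢ Icc 0 1 ×ˢ Icc 0 1) :=
    ((continuousOn_pdSnd hU (h12.of_le one_le_two)).comp (by fun_prop) h₁₂).prodMk
      ((continuousOn_pdFst hU (h23.of_le one_le_two)).comp (by fun_prop) h₂₃)
  exact (((continuousOn_copDens hU h12).comp (by fun_prop) h₁₂).mul
    ((continuousOn_copDens hU h23).comp (by fun_prop) h₂₃)).mul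
    ((continuousOn_copDens hU h132).comp hcond
      fun _ hp => hUsub ⟨hr12 _ hp.1 _ hp.2.1, hr32 _ hp.2.2 _ hp.2.1⟩)

lemma integral_copDens_cond12_mul_copDens (hU : IsOpen U)
    (hUsub : Icc (0 : ℝ) 1 ×ˢ Icc (0 : ℝ) 1 ⊆ U)
    (h12 : ContDiffOn ℝ 2 C12 U) (h132 : ContDiffOn ℝ 2 C132 U)
    (hb12 : ∀ t ∈ Icc (0 : ℝ) 1, C12 (0, t) = 0)
    (hb132 : ∀ t ∈ Icc (0 : ℝ) 1, C132 (0, t) = 0)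
    (hr12 : ∀ u1 ∈ Icc (0 : ℝ) 1, ∀ u2 ∈ Icc (0 : ℝ) 1, cond12 C12 u1 u2 ∈ Icc (0 : ℝ) 1)
    {u1 v2 y : ℝ} (hu1 : u1 ∈ Icc (0 : ℝ) 1) (hv2 : v2 ∈ Icc (0 : ℝ) 1)
    (hy : y ∈ Icc (0 : ℝ) 1) :
    ∫ v1 in 0..u1, copDens C132 (cond12 C12 v1 v2) y * copDens C12 v1 v2
      = pdSnd C132 (cond12 C12 u1 v2) y := by
  have hmem : ∀ {x z : ℝ}, x ∈ Icc (0 : ℝ) 1 → z ∈ Icc (0 : ℝ) 1 → (x, z) ∈ U :=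
    fun hx hz => hUsub ⟨hx, hz⟩
  have hsub := uIcc_zero_subset_Icc hu1
  have hderiv : ∀ v1 ∈ uIcc 0 u1, HasDerivAt (fun s => pdSnd C132 (cond12 C12 s v2) y)
      (copDens C132 (cond12 C12 v1 v2) y * copDens C12 v1 v2) v1 := fun v1 hv1 =>
    (hasDerivAt_pdSnd_left (b := y) hU h132 (hmem (hr12 _ (hsub hv1) _ hv2) hy)).comp
      (h := fun s => cond12 C12 s v2) v1 (hasDerivAt_pdSnd_left hU h12 (hmem (hsub hv1) hv2))
  have hcont : ContinuousOn (fun v1 => copDens C132 (cond12 C12 v1 v2) y * copDens C12 v1 v2)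
      (uIcc 0 u1) :=
    ((continuousOn_copDens hU h132).comp
      (((continuousOn_pdSnd hU (h12.of_le one_le_two)).comp (by fun_prop)
        fun _ hv1 => hmem (hsub hv1) hv2).prodMk continuousOn_const)
      fun _ hv1 => hmem (hr12 _ (hsub hv1) _ hv2) hy).mul
    ((continuousOn_copDens hU h12).comp (by fun_prop) fun _ hv1 => hmem (hsub hv1) hv2)
  have hdiff : ∀ {C : ℝ × ℝ → ℝ}, ContDiffOn ℝ 2 C U → ∀ {z}, z ∈ Icc (0 : ℝ) 1 →
      DifferentiableAt ℝ C (0, z) := fun hC _ hz =>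
    (hC.contDiffAt (hU.mem_nhds (hmem (left_mem_Icc.2 zero_le_one) hz))).differentiableAt
      (by norm_num)
  have hcond_zero : cond12 C12 0 v2 = 0 :=
    pdSnd_eq_zero_of_eqOn_Icc zero_lt_one (hdiff h12 hv2) hb12 hv2
  rw [intervalIntegral.integral_eq_sub_of_hasDerivAt hderiv hcont.intervalIntegrable, hcond_zero,
    pdSnd_eq_zero_of_eqOn_Icc zero_lt_one (hdiff h132 hy) hb132 hy, sub_zero]

end Vine

theorem vine_partial_u3_general
    (C12 C23 C132 : ℝ × ℝ → ℝ)
    (U : Set (ℝ × ℝ)) (hU : IsOpen U)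
    (hUsub : Set.Icc ((0 : ℝ), (0 : ℝ)) (1, 1) ⊆ U)
    (h12 : ContDiffOn ℝ 2 C12 U) (h23 : ContDiffOn ℝ 2 C23 U)
    (h132 : ContDiffOn ℝ 2 C132 U)
    (hb12 : ∀ t ∈ Set.Icc (0:ℝ) 1, C12 (0, t) = 0 ∧ C12 (t, 0) = 0)
    (hb132 : ∀ t ∈ Set.Icc (0:ℝ) 1, C132 (0, t) = 0 ∧ C132 (t, 0) = 0)
    (hr12 : ∀ u1 ∈ Set.Icc (0:ℝ) 1, ∀ u2 ∈ Set.Icc (0:ℝ) 1,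
      cond12 C12 u1 u2 ∈ Set.Icc (0:ℝ) 1)
    (hr32 : ∀ u3 ∈ Set.Icc (0:ℝ) 1, ∀ u2 ∈ Set.Icc (0:ℝ) 1,
      cond32 C23 u3 u2 ∈ Set.Icc (0:ℝ) 1)
    (u1 u2 u3 : ℝ) (hu1 : u1 ∈ Set.Icc (0:ℝ) 1) (hu2 : u2 ∈ Set.Icc (0:ℝ) 1)
    (hu3 : u3 ∈ Set.Ioo (0:ℝ) 1) :
    deriv (fun c => vine C12 C23 C132 u1 u2 c) u3 =
      ∫ v2 in (0:ℝ)..u2,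
        pdSnd C132 (cond12 C12 u1 v2) (cond32 C23 u3 v2) * copDens C23 v2 u3 := by
  rw [← Icc_prod_Icc] at hUsub
  have hu3' : u3 ∈ Icc (0 : ℝ) 1 := Ioo_subset_Icc_self hu3
  have hdens := continuousOn_vineDensity hU hUsub h12 h23 h132 hr12 hr32
  calc deriv (fun c => vine C12 C23 C132 u1 u2 c) u3
      = ∫ v1 in 0..u1, ∫ v2 in 0..u2, vineDensity C12 C23 C132 v1 v2 u3 :=
        (hasDerivAt_integral_integral_integral_of_continuousOn hdens hu1 hu2 hu3).deriv
    _ = ∫ v2 in 0..u2, ∫ v1 in 0..u1, vineDensity C12 C23 C132 v1 v2 u3 :=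
        intervalIntegral_swap_of_continuousOn
          (hdens.comp (f := fun q : ℝ × ℝ => (q.1, q.2, u3)) (s := uIcc 0 u1 ×ˢ uIcc 0 u2)
            (by fun_prop) fun _ hq =>
              ⟨uIcc_zero_subset_Icc hu1 hq.1, uIcc_zero_subset_Icc hu2 hq.2, hu3'⟩ :)
    _ = _ := intervalIntegral.integral_congr fun v2 hv2 => by
        have hv2' := uIcc_zero_subset_Icc hu2 hv2
        rw [← integral_copDens_cond12_mul_copDens hU hUsub h12 h132 (fun t ht => (hb12 t ht).1)
          (fun t ht => (hb132 t ht).1) hr12 hu1 hv2' (hr32 u3 hu3' v2 hv2'),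
          ← intervalIntegral.integral_mul_const]
        congr 1 with v1
        simp only [vineDensity]
        ring

/-- ∂C(u₁,u₂,u₃)/∂u₃ = ∫₀^{u₂} ∂₃C₁₃;₂(C_{1|2}(u₁|v₂), C_{3|2}(u₃|v₂)) ⬝ c₂₃(v₂,u₃) dv₂. -/
theorem vine_partial_u3
    (C12 C23 C132 : ℝ × ℝ → ℝ)
    (U : Set (ℝ × ℝ)) (hU : IsOpen U)
    (hUsub : Set.Icc ((0 : ℝ), (0 : ℝ)) (1, 1) ⊆ U)
    (h12 : ContDiffOn ℝ 2 C12 U) (h23 : ContDiffOn ℝ 2 C23 U)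
    (h132 : ContDiffOn ℝ 2 C132 U)
    (hb12 : ∀ t ∈ Set.Icc (0:ℝ) 1, C12 (0, t) = 0 ∧ C12 (t, 0) = 0)
    (hb23 : ∀ t ∈ Set.Icc (0:ℝ) 1, C23 (0, t) = 0 ∧ C23 (t, 0) = 0)
    (hb132 : ∀ t ∈ Set.Icc (0:ℝ) 1, C132 (0, t) = 0 ∧ C132 (t, 0) = 0)
    (hr12 : ∀ u1 ∈ Set.Icc (0:ℝ) 1, ∀ u2 ∈ Set.Icc (0:ℝ) 1,
      cond12 C12 u1 u2 ∈ Set.Icc (0:ℝ) 1)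
    (hr32 : ∀ u3 ∈ Set.Icc (0:ℝ) 1, ∀ u2 ∈ Set.Icc (0:ℝ) 1,
      cond32 C23 u3 u2 ∈ Set.Icc (0:ℝ) 1)
    (u1 u2 u3 : ℝ) (hu1 : u1 ∈ Set.Icc (0:ℝ) 1) (hu2 : u2 ∈ Set.Icc (0:ℝ) 1)
    (hu3 : u3 ∈ Set.Ioo (0:ℝ) 1) :
    deriv (fun c => vine C12 C23 C132 u1 u2 c) u3 =
      ∫ v2 in (0:ℝ)..u2,
        pdSnd C132 (cond12 C12 u1 v2) (cond32 C23 u3 v2) * copDens C23 v2 u3 :=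
  vine_partial_u3_general C12 C23 C132 U hU hUsub h12 h23 h132 hb12 hb132 hr12 hr32 u1 u2 u3 hu1 hu2
    hu3

end
end
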